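/- Let 0 < γ < 1, g_k^γ = (-1)^k binomial(γ, k), R ≥ 0, and let ε^0, ε^1, ..., ε^N be nonnegative reals satisfying ε^n ≤ - ∑_{k=1}^{n-1} g_k^γ ε^{n-k} + R for all 1 ≤ n ≤ N. Then ε^n ≤ (∑_{k=0}^{n-1} g_k^γ)^{-1} R ≤ n^γ Γ(1-γ) R for all 1 ≤ n ≤ N. -/
import Mathlib


/-- Generalized binomial coefficient `binomial(x, k) = x(x-1)⋯(x-k+1)/k!`. -/
noncomputable def genBinom (x : ℝ) (k : ℕ) : ℝ :=
  (∏ i ∈ Finset.range k, (x - i)) / (Nat.factorial k)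

/-- Grünwald coefficients `g_k^γ = (-1)^k binomial(γ, k)`. -/
noncomputable def g (x : ℝ) (k : ℕ) : ℝ := (-1 : ℝ) ^ k * genBinom x k

open Finset Real

/-- auxiliary product -/
noncomputable def Qa (γ : ℝ) (n : ℕ) : ℝ := ∏ i ∈ Finset.range n, ((i : ℝ) + 1 - γ)

lemma Qa_pos {γ : ℝ} (hγ2 : γ < 1) (n : ℕ) : 0 < Qa γ n := by
  refine Finset.prod_pos fun i _ => ?_
  have : (0:ℝ) ≤ i := Nat.cast_nonneg i
  linarith

lemma g_zero (γ : ℝ) : g γ 0 = 1 := by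
  simp [g, genBinom]

lemma g_succ (γ : ℝ) (n : ℕ) :
    g γ (n + 1) = -(γ * Qa γ n) / (Nat.factorial (n+1)) := by
  unfold g genBinom Qa
  rw [Finset.prod_range_succ']
  have h1 : (∏ i ∈ Finset.range n, (γ - ((i : ℕ) + 1 : ℕ))) =
      (-1 : ℝ) ^ n * ∏ i ∈ Finset.range n, ((i : ℝ) + 1 - γ) := by
    calc (∏ i ∈ Finset.range n, (γ - (((i : ℕ) + 1 : ℕ) : ℝ)))
        = ∏ i ∈ Finset.range n, ((-1 : ℝ) * ((i : ℝ) + 1 - γ)) :=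
          Finset.prod_congr rfl fun i _ => by push_cast; ring
      _ = (-1 : ℝ) ^ n * ∏ i ∈ Finset.range n, ((i : ℝ) + 1 - γ) := by
          rw [Finset.prod_mul_distrib, Finset.prod_const, Finset.card_range]
  have h3 : ((-1:ℝ))^n * (-1)^n = 1 := by rw [← pow_add, ← two_mul, pow_mul]; norm_num
  rw [h1, ← mul_div_assoc]
  congr 1
  push_cast
  linear_combination (-(γ * ∏ i ∈ Finset.range n, ((i : ℝ) + 1 - γ))) * h3

lemma g_neg {γ : ℝ} (hγ1 : 0 < γ) (hγ2 : γ < 1) {k : ℕ} (hk : 1 ≤ k) : g γ k < 0 := by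
  obtain ⟨n, rfl⟩ := Nat.exists_eq_add_of_le hk
  rw [show 1 + n = n + 1 by ring, g_succ]
  apply div_neg_of_neg_of_pos
  · have := Qa_pos hγ2 n; nlinarith
  · exact_mod_cast Nat.factorial_pos (n+1)

lemma sum_g_eq (γ : ℝ) (n : ℕ) :
    ∑ k ∈ Finset.range (n+1), g γ k = Qa γ n / (Nat.factorial n) := by
  induction n with
  | zero => simp [g_zero, Qa]
  | succ n ih =>
    rw [Finset.sum_range_succ, ih, g_succ]
    have hfac : (Nat.factorial (n+1) : ℝ) = (n+1) * Nat.factorial n := by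
      push_cast [Nat.factorial_succ]; ring
    have hQ : Qa γ (n+1) = Qa γ n * ((n : ℝ) + 1 - γ) := Finset.prod_range_succ _ n
    have h0 : (Nat.factorial n : ℝ) ≠ 0 := by exact_mod_cast (Nat.factorial_pos n).ne'
    have h1 : ((n:ℝ) + 1) ≠ 0 := by positivity
    rw [hQ, hfac]
    field_simp
    ring

lemma sum_g_pos {γ : ℝ} (hγ2 : γ < 1) {n : ℕ} (hn : 1 ≤ n) :
    0 < ∑ k ∈ Finset.range n, g γ k := by
  obtain ⟨m, rfl⟩ := Nat.exists_eq_add_of_le hn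
  rw [show 1 + m = m + 1 by ring, sum_g_eq]
  exact div_pos (Qa_pos hγ2 m) (by exact_mod_cast Nat.factorial_pos m)

lemma sum_g_anti {γ : ℝ} (hγ1 : 0 < γ) (hγ2 : γ < 1) {m n : ℕ} (hm : 1 ≤ m) (hmn : m ≤ n) :
    ∑ k ∈ Finset.range n, g γ k ≤ ∑ k ∈ Finset.range m, g γ k := by
  rw [← Finset.sum_range_add_sum_Ico _ hmn]
  have : ∑ k ∈ Finset.Ico m n, g γ k ≤ 0 := by
    apply Finset.sum_nonpos
    intro k hk
    exact (g_neg hγ1 hγ2 (le_trans hm (Finset.mem_Ico.mp hk).1)).le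
  linarith

/-- Gamma representation of the partial sums. -/
lemma Qa_Gamma {γ : ℝ} (hγ2 : γ < 1) (n : ℕ) :
    Qa γ n * Real.Gamma (1 - γ) = Real.Gamma ((n : ℝ) + 1 - γ) := by
  induction n with
  | zero => simp [Qa]
  | succ n ih =>
    have hQ : Qa γ (n+1) = Qa γ n * ((n : ℝ) + 1 - γ) := Finset.prod_range_succ _ n
    have hpos : (0:ℝ) < (n : ℝ) + 1 - γ := by
      have : (0:ℝ) ≤ n := Nat.cast_nonneg n
      linarith
    have hG := Real.Gamma_add_one (s := (n : ℝ) + 1 - γ) hpos.ne'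
    rw [hQ]
    push_cast
    rw [show (n:ℝ) + 1 + 1 - γ = ((n:ℝ) + 1 - γ) + 1 by ring, hG, ← ih]
    ring

/-- Gautschi-type inequality via log-convexity of Γ. -/
lemma gamma_ratio_le {γ : ℝ} (hγ1 : 0 < γ) (hγ2 : γ < 1) {x : ℝ} (hx : 1 ≤ x) :
    Real.Gamma x ≤ Real.Gamma (x - γ) * x ^ γ := by
  have hxγ : (0:ℝ) < x - γ := by linarith
  have hx1γ : (0:ℝ) < x + 1 - γ := by linarith
  have hconv := Real.convexOn_log_Gamma
  have key := hconv.2 (Set.mem_Ioi.mpr hxγ) (Set.mem_Ioi.mpr hx1γ)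
    (by linarith : (0:ℝ) ≤ 1 - γ) hγ1.le (by ring : (1 - γ) + γ = 1)
  have hcomb : (1 - γ) • (x - γ) + γ • (x + 1 - γ) = x := by
    simp only [smul_eq_mul]; ring
  rw [hcomb] at key
  simp only [Function.comp_apply, smul_eq_mul] at key
  have hG1 : Real.Gamma (x + 1 - γ) = (x - γ) * Real.Gamma (x - γ) := by
    rw [show x + 1 - γ = (x - γ) + 1 by ring, Real.Gamma_add_one hxγ.ne']
  have hGx : 0 < Real.Gamma x := Real.Gamma_pos_of_pos (by linarith)
  have hGxγ : 0 < Real.Gamma (x - γ) := Real.Gamma_pos_of_pos hxγ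
  have hlog : Real.log (Real.Gamma x) ≤
      Real.log (Real.Gamma (x - γ)) + γ * Real.log (x - γ) := by
    rw [hG1, Real.log_mul hxγ.ne' hGxγ.ne'] at key
    nlinarith [key]
  have step1 : Real.Gamma x ≤ Real.Gamma (x - γ) * (x - γ) ^ γ := by
    have hrpow : (0:ℝ) < (x - γ) ^ γ := Real.rpow_pos_of_pos hxγ γ
    rw [← Real.log_le_log_iff hGx (by positivity),
      Real.log_mul hGxγ.ne' hrpow.ne', Real.log_rpow hxγ]
    exact hlog
  have step2 : (x - γ) ^ γ ≤ x ^ γ :=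
    Real.rpow_le_rpow hxγ.le (by linarith) hγ1.le
  calc Real.Gamma x ≤ Real.Gamma (x - γ) * (x - γ) ^ γ := step1
    _ ≤ Real.Gamma (x - γ) * x ^ γ := by nlinarith

lemma sum_g_inv_le {γ : ℝ} (hγ1 : 0 < γ) (hγ2 : γ < 1) {n : ℕ} (hn : 1 ≤ n) :
    (∑ k ∈ Finset.range n, g γ k)⁻¹ ≤ (n : ℝ) ^ γ * Real.Gamma (1 - γ) := by
  obtain ⟨m, rfl⟩ := Nat.exists_eq_add_of_le hn
  rw [show 1 + m = m + 1 by ring, sum_g_eq]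
  have hQ := Qa_pos hγ2 m
  have hfac : (0:ℝ) < (Nat.factorial m : ℝ) := by exact_mod_cast Nat.factorial_pos m
  have hx : (1:ℝ) ≤ (m : ℝ) + 1 := by
    have : (0:ℝ) ≤ m := Nat.cast_nonneg m; linarith
  have hG := gamma_ratio_le hγ1 hγ2 hx
  have hGam : Qa γ m * Real.Gamma (1 - γ) = Real.Gamma ((m : ℝ) + 1 - γ) := Qa_Gamma hγ2 m
  have hfacG : Real.Gamma ((m : ℝ) + 1) = (Nat.factorial m : ℝ) := by
    exact_mod_cast Real.Gamma_nat_eq_factorial m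
  rw [inv_div]
  rw [div_le_iff₀ hQ]
  have hGγ : 0 < Real.Gamma (1 - γ) := Real.Gamma_pos_of_pos (by linarith)
  have hcast : ((m + 1 : ℕ) : ℝ) = (m : ℝ) + 1 := by push_cast; ring
  rw [hcast]
  -- goal : ↑m ! ≤ (↑m + 1) ^ γ * Real.Gamma (1 - γ) * Qa γ m
  calc (Nat.factorial m : ℝ) = Real.Gamma ((m:ℝ) + 1) := hfacG.symm
    _ ≤ Real.Gamma ((m:ℝ) + 1 - γ) * ((m:ℝ)+1) ^ γ := hG
    _ = ((m:ℝ)+1) ^ γ * Real.Gamma (1 - γ) * Qa γ m := by rw [← hGam]; ring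

theorem stmt6 (γ : ℝ) (hγ1 : 0 < γ) (hγ2 : γ < 1) (R : ℝ) (hR : 0 ≤ R)
    (N : ℕ) (ε : ℕ → ℝ) (hnn : ∀ n, n ≤ N → 0 ≤ ε n)
    (hrec : ∀ n, 1 ≤ n → n ≤ N →
      ε n ≤ -(∑ k ∈ Finset.Icc 1 (n - 1), g γ k * ε (n - k)) + R) :
    ∀ n, 1 ≤ n → n ≤ N →
      ε n ≤ (∑ k ∈ Finset.range n, g γ k)⁻¹ * R ∧
      (∑ k ∈ Finset.range n, g γ k)⁻¹ * R ≤ (n : ℝ) ^ γ * Real.Gamma (1 - γ) * R := by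
  have key : ∀ n, 1 ≤ n → n ≤ N → ε n ≤ (∑ k ∈ Finset.range n, g γ k)⁻¹ * R := by
    intro n
    induction n using Nat.strong_induction_on with
    | _ n ih =>
      intro hn1 hnN
      have hSn := sum_g_pos hγ2 hn1
      -- rewrite Icc 1 (n-1) as Ico 1 n
      have hIcc : Finset.Icc 1 (n - 1) = Finset.Ico 1 n := by
        rw [← Finset.Ico_add_one_right_eq_Icc]
        congr 1
        omega
      have hterm : ∀ k ∈ Finset.Ico 1 n,
          -(g γ k * ε (n - k)) ≤ -(g γ k) * ((∑ j ∈ Finset.range n, g γ j)⁻¹ * R) := by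
        intro k hk
        obtain ⟨hk1, hkn⟩ := Finset.mem_Ico.mp hk
        have hnk1 : 1 ≤ n - k := by omega
        have hnkN : n - k ≤ N := by omega
        have hnkn : n - k < n := by omega
        have hgk := g_neg hγ1 hγ2 hk1
        have hε := ih (n - k) hnkn hnk1 hnkN
        have hSmono : (∑ j ∈ Finset.range (n - k), g γ j)⁻¹ ≤
            (∑ j ∈ Finset.range n, g γ j)⁻¹ := by
          apply inv_anti₀ hSn
          exact sum_g_anti hγ1 hγ2 hnk1 (by omega)
        have hε2 : ε (n - k) ≤ (∑ j ∈ Finset.range n, g γ j)⁻¹ * R :=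
          le_trans hε (mul_le_mul_of_nonneg_right hSmono hR)
        have : -(g γ k) ≥ 0 := by linarith
        nlinarith
      have hsum : -(∑ k ∈ Finset.Icc 1 (n - 1), g γ k * ε (n - k)) ≤
          (∑ k ∈ Finset.Ico 1 n, -(g γ k)) * ((∑ j ∈ Finset.range n, g γ j)⁻¹ * R) := by
        rw [hIcc, ← Finset.sum_neg_distrib, Finset.sum_mul]
        exact Finset.sum_le_sum hterm
      have hsplit : ∑ k ∈ Finset.Ico 1 n, -(g γ k) = 1 - ∑ j ∈ Finset.range n, g γ j := by
        have : ∑ j ∈ Finset.range n, g γ j = g γ 0 + ∑ k ∈ Finset.Ico 1 n, g γ k := by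
          rw [Finset.range_eq_Ico]
          exact Finset.sum_eq_sum_Ico_succ_bot hn1 _
        rw [Finset.sum_neg_distrib, this, g_zero]
        ring
      have := hrec n hn1 hnN
      have hfin : (1 - ∑ j ∈ Finset.range n, g γ j) * ((∑ j ∈ Finset.range n, g γ j)⁻¹ * R) + R
          = (∑ j ∈ Finset.range n, g γ j)⁻¹ * R := by
        field_simp
        ring
      calc ε n ≤ -(∑ k ∈ Finset.Icc 1 (n - 1), g γ k * ε (n - k)) + R := this
        _ ≤ (1 - ∑ j ∈ Finset.range n, g γ j) * ((∑ j ∈ Finset.range n, g γ j)⁻¹ * R) + R := by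
            rw [← hsplit]; linarith
        _ = (∑ j ∈ Finset.range n, g γ j)⁻¹ * R := hfin
  intro n hn1 hnN
  refine ⟨key n hn1 hnN, ?_⟩
  exact mul_le_mul_of_nonneg_right (sum_g_inv_le hγ1 hγ2 hn1) hR
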